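/- arXiv:1401.0173 — 3 statements merged into one kernel-verified Lean document; each statement's English description precedes it below -/
import Mathlib

section
/- For every h ∈ ℕ, I_h(1; X, X^2, …, X^h) = (1−X)^{−h} as rational functions in the single variable X over ℚ, i.e. substituting X_i := X^i for i = 1,…,h into the Igusa function at Y = 1 gives 1/(1−X)^h. -/
noncomputable section

/-- The Gaussian binomial coefficient `binom(a,b)_Y`, as an element of a field,
evaluated at `Y`. -/
def gaussBinom {K : Type*} [Field K] (Y : K) (a b : ℕ) : K :=
  (∏ i ∈ Finset.Icc (a - b + 1) a, (1 - Y ^ i)) / ∏ i ∈ Finset.Icc 1 b, (1 - Y ^ i)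

def gaussMultinomAux {K : Type*} [Field K] (Y : K) : ℕ → List ℕ → K
  | _, [] => 1
  | n, i :: is => gaussBinom Y n i * gaussMultinomAux Y i is

/-- The Gaussian multinomial coefficient `binom(n, I)_Y`:
for `I = {i₁ < ⋯ < iₘ}`, this is `binom(n,iₘ)_Y · binom(iₘ,i_{m-1})_Y ⋯ binom(i₂,i₁)_Y`. -/
def gaussMultinom {K : Type*} [Field K] (Y : K) (n : ℕ) (I : Finset ℕ) : K :=
  gaussMultinomAux Y n ((I.sort (· ≤ ·)).reverse)

def multinomAux : ℕ → List ℕ → ℕ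
  | _, [] => 1
  | n, i :: is => n.choose i * multinomAux i is

/-- The ordinary multinomial coefficient `binom(n, I)`, the value of `binom(n,I)_Y` at `Y = 1`. -/
def multinom (n : ℕ) (I : Finset ℕ) : ℕ :=
  multinomAux n ((I.sort (· ≤ ·)).reverse)

/-- The Igusa function `I_h(Y; X_1, …, X_h)`. -/
def igusa {K : Type*} [Field K] (h : ℕ) (Y : K) (X : ℕ → K) : K :=
  (1 - X h)⁻¹ * ∑ I ∈ (Finset.Icc 1 (h - 1)).powerset,
    gaussMultinom Y h I * ∏ i ∈ I, X i / (1 - X i)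

/-- The Igusa function `I_h^∘(Y; X_1, …, X_h)`. -/
def igusaCirc {K : Type*} [Field K] (h : ℕ) (Y : K) (X : ℕ → K) : K :=
  X h * igusa h Y X

/-- The Igusa function at `Y = 1`, `I_h(1; X_1, …, X_h)`, with ordinary multinomials. -/
def igusaOne {K : Type*} [Field K] (h : ℕ) (X : ℕ → K) : K :=
  (1 - X h)⁻¹ * ∑ I ∈ (Finset.Icc 1 (h - 1)).powerset,
    (multinom h I : K) * ∏ i ∈ I, X i / (1 - X i)

/-- The chains (of arbitrary finite length, including the empty chain) of nonempty proper
subsets of `{1, …, h}`, encoded as finsets of subsets that are totally ordered by inclusion. -/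
def chainsOn (h : ℕ) : Finset (Finset (Finset ℕ)) :=
  ((Finset.Icc 1 h).powerset.filter
      (fun I => I ≠ ∅ ∧ I ≠ Finset.Icc 1 h)).powerset.filter
    (fun C => ∀ I ∈ C, ∀ J ∈ C, I ⊆ J ∨ J ⊆ I)

/-- The generalized Igusa function `I^wo_h((X_𝓘)_𝓘)`, with variables indexed by the
nonempty subsets of `{1, …, h}`. -/
def igusaWO {K : Type*} [Field K] (h : ℕ) (X : Finset ℕ → K) : K :=
  (1 - X (Finset.Icc 1 h))⁻¹ * ∑ C ∈ chainsOn h, ∏ I ∈ C, X I / (1 - X I)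

/-- The Igusa function `I_h(Y; X_1, …, X_h)` with power series arguments. -/
def igusaPS (h : ℕ) (Y : ℚ) (X : ℕ → PowerSeries ℚ) : PowerSeries ℚ :=
  (1 - X h)⁻¹ * ∑ I ∈ (Finset.Icc 1 (h - 1)).powerset,
    PowerSeries.C (gaussMultinom Y h I) * ∏ i ∈ I, X i * (1 - X i)⁻¹

/-- The Igusa function `I_h^∘(Y; X_1, …, X_h)` with power series arguments. -/
def igusaCircPS (h : ℕ) (Y : ℚ) (X : ℕ → PowerSeries ℚ) : PowerSeries ℚ :=
  X h * igusaPS h Y X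

/-- The Igusa function `I_h(1; X_1, …, X_h)` with power series arguments. -/
def igusaOnePS (h : ℕ) (X : ℕ → PowerSeries ℚ) : PowerSeries ℚ :=
  (1 - X h)⁻¹ * ∑ I ∈ (Finset.Icc 1 (h - 1)).powerset,
    (multinom h I : PowerSeries ℚ) * ∏ i ∈ I, X i * (1 - X i)⁻¹

/-- The generalized Igusa function `I^wo_h` with power series arguments. -/
def igusaWOPS (h : ℕ) (X : Finset ℕ → PowerSeries ℚ) : PowerSeries ℚ :=
  (1 - X (Finset.Icc 1 h))⁻¹ * ∑ C ∈ chainsOn h, ∏ I ∈ C, X I * (1 - X I)⁻¹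

/-- `lam` encodes a partition `λ_1 ≥ ⋯ ≥ λ_n ≥ 0` with at most `n` parts
(indexed from `1`; the irrelevant values `lam 0` and `lam j` for `j > n` are zero). -/
def IsPartition (n : ℕ) (lam : ℕ → ℕ) : Prop :=
  (∀ j, 1 ≤ j → lam (j + 1) ≤ lam j) ∧ ∀ j, j = 0 ∨ n < j → lam j = 0

/-- `ℓ` encodes an `n`-tuple of non-negative integers, indexed from `1`
(the irrelevant values at `0` and beyond `n` are zero). -/
def IsTuple (n : ℕ) (ℓ : ℕ → ℕ) : Prop :=
  ∀ j, j = 0 ∨ n < j → ℓ j = 0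

/-- The dual partition: `λ'_k = #{j ∈ {1,…,n} : λ_j ≥ k}`. -/
def dualPart (n : ℕ) (lam : ℕ → ℕ) (k : ℕ) : ℕ :=
  ((Finset.Icc 1 n).filter fun j => k ≤ lam j).card

/-- `α(λ, μ; p)`: the number of subgroups of `⊕_{k=1}^n ℤ/p^{λ_k}ℤ` that are isomorphic
to `⊕_{k=1}^n ℤ/p^{μ_k}ℤ`. -/
def alphaCount (p n : ℕ) (lam mu : ℕ → ℕ) : ℕ :=
  Nat.card {H : AddSubgroup ((j : Fin n) → ZMod (p ^ lam (j.1 + 1))) //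
    Nonempty (H ≃+ ((j : Fin n) → ZMod (p ^ mu (j.1 + 1))))}

/-- `β(λ)`: the number of `n`-tuples `ℓ ∈ ℕ₀ⁿ` whose non-increasing rearrangement is `λ`. -/
def betaCount (n : ℕ) (lam : ℕ → ℕ) : ℕ :=
  Nat.card {ℓ : Fin n → ℕ // ∃ σ : Equiv.Perm (Fin n), ∀ j, ℓ (σ j) = lam (j.1 + 1)}

/-- `(r, L, M)` are the parameters of a Dyck word of length `2n`:
`w = 0^{L_1}1^{M_1}0^{L_2-L_1}1^{M_2-M_1}⋯0^{L_r-L_{r-1}}1^{M_r-M_{r-1}}`. -/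
def DyckParams (n r : ℕ) (L M : ℕ → ℕ) : Prop :=
  1 ≤ r ∧ L 0 = 0 ∧ M 0 = 0 ∧ L r = n ∧ M r = n ∧
    ∀ i ∈ Finset.Icc 1 r, L (i - 1) < L i ∧ M (i - 1) < M i ∧ M i ≤ L i

/-- `w(μ, λ) = w` for the Dyck word `w` with parameters `(r, L, M)`:
`λ_{L_i} ≥ μ_{M_{i-1}+1}` for `i ∈ {1,…,r}` and `μ_{M_i} > λ_{L_i+1}` for `i ∈ {1,…,r-1}`. -/
def WMatch (r : ℕ) (L M : ℕ → ℕ) (mu lam : ℕ → ℕ) : Prop :=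
  (∀ i ∈ Finset.Icc 1 r, mu (M (i - 1) + 1) ≤ lam (L i)) ∧
    ∀ i ∈ Finset.Icc 1 (r - 1), lam (L i + 1) < mu (M i)

/-- `t_i = |𝒜_1| + ⋯ + |𝒜_i|` for an ordered set partition `𝒜`. -/
def tpar (𝒜 : ℕ → Finset ℕ) (i : ℕ) : ℕ :=
  ∑ k ∈ Finset.Icc 1 i, (𝒜 k).card

/-- The `j`-th smallest element of a finite set of naturals (`j` counted from `1`). -/
def sortedElt (A : Finset ℕ) (j : ℕ) : ℕ :=
  (A.sort (· ≤ ·)).getD (j - 1) 0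

/-- `ε^{(i)}(𝓘) = L_{i-1} + ∑_{j ∈ 𝓘} f_{a^{(i)}_j}`, where `a^{(i)}_1 < ⋯` are the
elements of `𝒜_i`. -/
def epsA (f L : ℕ → ℕ) (𝒜 : ℕ → Finset ℕ) (i : ℕ) (I : Finset ℕ) : ℕ :=
  L (i - 1) + ∑ j ∈ I, f (sortedElt (𝒜 i) j)

/-- The number of ideals of additive index `m` in the Heisenberg Lie ring `L(R) = R⊕R⊕R`
with bracket `[(a,b,c),(a',b',c')] = (0,0,ab'-a'b)`. -/
def heisenbergIdealCount (R : Type*) [CommRing R] (m : ℕ) : ℕ :=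
  Nat.card {I : AddSubgroup (R × R × R) //
    (∀ x ∈ I, ∀ y : R × R × R, (0, 0, y.1 * x.2.1 - x.1 * y.2.1) ∈ I) ∧ I.index = m}

/-- The explicit rational function `E^f_{w,𝒜}(X,Y)` attached to a Dyck word with parameters
`(r, L, M)` and a compatible ordered set partition `𝒜` of `{1,…,g}`. -/
def Efun {F : Type*} [Field F] (n r : ℕ) (f L M : ℕ → ℕ) (𝒜 : ℕ → Finset ℕ)
    (Xv Yv : F) : F :=
  (∏ i ∈ Finset.Icc 1 r, gaussBinom Xv⁻¹ (L i - M (i - 1)) (L i - M i)) *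
    (∏ i ∈ Finset.Icc 1 r, igusaWO (tpar 𝒜 i - tpar 𝒜 (i - 1))
      (fun I => Xv ^ ((2 * n - M (i - 1) + epsA f L 𝒜 i I) * M (i - 1)) *
        Yv ^ (2 * epsA f L 𝒜 i I + M (i - 1)))) *
    (∏ i ∈ Finset.Icc 1 (r - 1), igusaCirc (M i - M (i - 1)) Xv⁻¹
      (fun j => Xv ^ ((M (i - 1) + j) * (2 * n + L i - (M (i - 1) + j))) *
        Yv ^ (2 * L i + M (i - 1) + j))) *
    igusa (n - M (r - 1)) Xv⁻¹
      (fun j => Xv ^ ((M (r - 1) + j) * (2 * n + L r - (M (r - 1) + j))) *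
        Yv ^ (2 * L r + M (r - 1) + j))

/-- The power series `E^f_{w,𝒜}(p,t)`, the explicit rational function `E^f_{w,𝒜}`
evaluated at `X = p`, `Y = t` and expanded as a power series in `t`. -/
def EfunPS (p n r : ℕ) (f L M : ℕ → ℕ) (𝒜 : ℕ → Finset ℕ) : PowerSeries ℚ :=
  (∏ i ∈ Finset.Icc 1 r,
      PowerSeries.C (gaussBinom ((p : ℚ)⁻¹) (L i - M (i - 1)) (L i - M i))) *
    (∏ i ∈ Finset.Icc 1 r, igusaWOPS (tpar 𝒜 i - tpar 𝒜 (i - 1))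
      (fun I => PowerSeries.C ((p : ℚ) ^ ((2 * n - M (i - 1) + epsA f L 𝒜 i I) * M (i - 1))) *
        PowerSeries.X ^ (2 * epsA f L 𝒜 i I + M (i - 1)))) *
    (∏ i ∈ Finset.Icc 1 (r - 1), igusaCircPS (M i - M (i - 1)) ((p : ℚ)⁻¹)
      (fun j => PowerSeries.C ((p : ℚ) ^ ((M (i - 1) + j) * (2 * n + L i - (M (i - 1) + j)))) *
        PowerSeries.X ^ (2 * L i + M (i - 1) + j))) *
    igusaPS (n - M (r - 1)) ((p : ℚ)⁻¹)
      (fun j => PowerSeries.C ((p : ℚ) ^ ((M (r - 1) + j) * (2 * n + L r - (M (r - 1) + j)))) *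
        PowerSeries.X ^ (2 * L r + M (r - 1) + j))

/-- The set of canonical representatives `(r, L, M, 𝒜)` of all pairs consisting of
a Dyck word `w` of length `2n` and an ordered set partition `𝒜` of `{1,…,g}`
compatible with `w`. -/
def dyckPartData (g n : ℕ) (f : ℕ → ℕ) : Set (ℕ × (ℕ → ℕ) × (ℕ → ℕ) × (ℕ → Finset ℕ)) :=
  {d | DyckParams n d.1 d.2.1 d.2.2.1 ∧
    (∀ j, d.1 < j → d.2.1 j = n ∧ d.2.2.1 j = n) ∧
    (∀ i ∈ Finset.Icc 1 d.1, (d.2.2.2 i).Nonempty) ∧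
    (∀ i ∈ Finset.Icc 1 d.1, ∀ j ∈ Finset.Icc 1 d.1, i ≠ j → Disjoint (d.2.2.2 i) (d.2.2.2 j)) ∧
    (Finset.Icc 1 d.1).biUnion d.2.2.2 = Finset.Icc 1 g ∧
    (∀ i ∈ Finset.Icc 1 d.1, ∑ j ∈ d.2.2.2 i, f j = d.2.1 i - d.2.1 (i - 1)) ∧
    (∀ j, j = 0 ∨ d.1 < j → d.2.2.2 j = ∅)}

/-- The explicit rational function `W^f(X,Y)` expressing the local normal zeta function of
the Heisenberg group at an unramified prime with residue degrees `f_1, …, f_g`. -/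
def Wfun {F : Type*} [Field F] (g n : ℕ) (f : ℕ → ℕ) (Xv Yv : F) : F :=
  (∏ i ∈ Finset.Icc 1 g, (1 - Yv ^ (2 * f i))) *
    (∏ i ∈ Finset.range (2 * n), (1 - Xv ^ i * Yv)⁻¹) *
    ∑ᶠ d ∈ dyckPartData g n f, Efun n d.1 f d.2.1 d.2.2.1 d.2.2.2 Xv Yv
end

/-!
Write `u i = x ^ i / (1 - x ^ i)`, `y = x / (1 - x)` and
`S_k(n) = ∑_{I ⊆ {1, …, k}} binom(n, I) ∏_{i ∈ I} u i`. Since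
`binom(n, I ∪ {k}) = binom(n, k) · binom(k, I)` when `k > max I`, these sums satisfy
`S_k(n) = S_{k-1}(n) + binom(n, k) · u k · S_{k-1}(k)`, and induction on `k` gives
`S_k(n) = ∑_{j ≤ k} binom(n, j) y^j`. The new term comes out right because `1 + y = (1 - x)⁻¹`,
so `∑_{j < k} binom(k, j) y^j = (1 + y)^k - y^k = (1 - x^k) / (1 - x)^k` and
`u k · (1 - x^k) / (1 - x)^k = y^k`. Finally `I_h(1; x, …, x^h) = (1 - x^h)⁻¹ · S_{h-1}(h)`, and
`S_{h-1}(h) = (1 - x^h) / (1 - x)^h` by the same binomial identity.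
-/

open Finset

theorem Finset.reverse_sort_le_eq_sort_ge {α : Type*} [LinearOrder α] (s : Finset α) :
    (s.sort (· ≤ ·)).reverse = s.sort (· ≥ ·) :=
  List.Perm.eq_of_pairwise' (List.pairwise_reverse.2 (s.pairwise_sort _)) (s.pairwise_sort _)
    ((List.reverse_perm _).trans ((s.sort_perm_toList _).trans (s.sort_perm_toList _).symm))

theorem multinom_insert_of_forall_lt {n k : ℕ} {I : Finset ℕ} (h : ∀ i ∈ I, i < k) :
    multinom n (insert k I) = n.choose k * multinom k I := by
  have hk : k ∉ I := fun hk => lt_irrefl k (h k hk)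
  simp only [multinom, Finset.reverse_sort_le_eq_sort_ge,
    Finset.sort_insert (fun a b : ℕ => a ≥ b) (fun i hi => (h i hi).le) hk]
  rfl

def multinomSum {K : Type*} [CommSemiring K] (u : ℕ → K) (k n : ℕ) : K :=
  ∑ I ∈ (Icc 1 k).powerset, (multinom n I : K) * ∏ i ∈ I, u i

section multinomSum

variable {K : Type*} [CommSemiring K] (u : ℕ → K)

theorem multinomSum_zero (n : ℕ) : multinomSum u 0 n = 1 := by
  simp [multinomSum, multinom, multinomAux]

theorem multinomSum_succ (k n : ℕ) :
    multinomSum u (k + 1) n =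
      multinomSum u k n + n.choose (k + 1) * u (k + 1) * multinomSum u k (k + 1) := by
  have hk : k + 1 ∉ Icc 1 k := by simp
  rw [multinomSum, ← insert_Icc_right_eq_Icc_add_one (by omega : 1 ≤ k + 1),
    sum_powerset_insert hk, multinomSum, multinomSum, mul_sum]
  congr 1
  refine sum_congr rfl fun I hI => ?_
  have hlt : ∀ i ∈ I, i < k + 1 := fun i hi => by
    have := mem_Icc.1 (mem_powerset.1 hI hi); omega
  rw [multinom_insert_of_forall_lt hlt, prod_insert fun hk => lt_irrefl _ (hlt _ hk)]
  push_cast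
  ring

end multinomSum

section geometric

variable {K : Type*} [Field K] {x : K}

theorem sum_range_choose_mul_div_one_sub_pow (hx : x ≠ 1) (k : ℕ) :
    ∑ j ∈ range k, (k.choose j : K) * (x / (1 - x)) ^ j = (1 - x ^ k) / (1 - x) ^ k := by
  have hx' : 1 - x ≠ 0 := sub_ne_zero.2 hx.symm
  have hbinom := add_pow (x / (1 - x)) 1 k
  simp only [one_pow, mul_one, sum_range_succ, Nat.choose_self, Nat.cast_one] at hbinom
  have hy : x / (1 - x) + 1 = (1 - x)⁻¹ := by field_simp; ring
  rw [hy] at hbinom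
  simp_rw [mul_comm (k.choose _ : K)]
  rw [eq_sub_of_add_eq hbinom.symm, inv_pow, div_pow]
  field_simp

theorem multinomSum_geometric {k : ℕ} (hx : ∀ i ∈ Icc 1 k, x ^ i ≠ 1) (n : ℕ) :
    multinomSum (fun i => x ^ i / (1 - x ^ i)) k n =
      ∑ j ∈ range (k + 1), (n.choose j : K) * (x / (1 - x)) ^ j := by
  induction k generalizing n with
  | zero => simp [multinomSum_zero]
  | succ k ih =>
    have hx' : ∀ i ∈ Icc 1 k, x ^ i ≠ 1 := fun i hi =>
      hx i (Icc_subset_Icc_right k.le_succ hi)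
    have hx1 : x ≠ 1 := by simpa using hx 1 (by simp)
    have hxk : 1 - x ^ (k + 1) ≠ 0 := sub_ne_zero.2 (hx (k + 1) (by simp)).symm
    rw [multinomSum_succ, ih hx' n, ih hx' (k + 1), sum_range_choose_mul_div_one_sub_pow hx1,
      sum_range_succ _ (k + 1), mul_assoc, div_mul_div_cancel₀ hxk, ← div_pow]

theorem igusaOne_pow {h : ℕ} (hh : 0 < h) (hx : ∀ i ∈ Icc 1 h, x ^ i ≠ 1) :
    igusaOne h (x ^ ·) = ((1 - x) ^ h)⁻¹ := by
  have hx1 : x ≠ 1 := by simpa using hx 1 (by simp; omega)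
  have hxh : 1 - x ^ h ≠ 0 := sub_ne_zero.2 (hx h (by simp; omega)).symm
  have hsum : igusaOne h (x ^ ·) =
      (1 - x ^ h)⁻¹ * multinomSum (fun i => x ^ i / (1 - x ^ i)) (h - 1) h := rfl
  rw [hsum, multinomSum_geometric (fun i hi => hx i (Icc_subset_Icc_right (by omega) hi)),
    Nat.sub_add_cancel hh, sum_range_choose_mul_div_one_sub_pow hx1, ← mul_div_assoc,
    inv_mul_cancel₀ hxh, one_div]

end geometric

theorem RatFunc.X_pow_ne_one {K : Type*} [Field K] {i : ℕ} (hi : i ≠ 0) :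
    (RatFunc.X : RatFunc K) ^ i ≠ 1 := fun h =>
  RatFunc.transcendental_X (K := K) ⟨Polynomial.X ^ i - Polynomial.C 1,
    Polynomial.X_pow_sub_C_ne_zero (Nat.pos_of_ne_zero hi) 1, by simp [h]⟩

/-- `I_h(1; X, X², …, X^h) = (1 - X)^{-h}` as rational functions in `X` over `ℚ`. -/
theorem igusaOne_geometric (h : ℕ) (hh : 0 < h) :
    igusaOne h (fun i => (RatFunc.X : RatFunc ℚ) ^ i) =
      ((1 - (RatFunc.X : RatFunc ℚ)) ^ h)⁻¹ :=
  igusaOne_pow hh fun _ hi => RatFunc.X_pow_ne_one (by simp at hi; omega)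
end

section
/- Let p be a prime, g ∈ ℕ, f = (f_1,…,f_g) ∈ ℕ^g, W_i = W(𝔽_{p^{f_i}}) the ring of Witt vectors over the field with p^{f_i} elements, and R = W_1 × ⋯ × W_g. Let Λ ≤ R⊕R be an additive subgroup of finite index, and for i ∈ {1,…,g} let ε_i(Λ) be the largest e ∈ ℕ_0 with π_i(Λ) ⊆ p^e(W_i⊕W_i), where π_i : R⊕R → W_i⊕W_i is the projection. Then the additive subgroup of R generated by {a·b' − a'·b : (a,b) ∈ Λ, (a',b') ∈ R⊕R} equals p^{ε_1(Λ)}W_1 × ⋯ × p^{ε_g(Λ)}W_g; consequently the quotient of R by this subgroup is isomorphic as an abelian group to ∏_{i=1}^g (ℤ/p^{ε_i(Λ)}ℤ)^{f_i}. -/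
/-!
Since `(a', b')` ranges over all of `R ⊕ R`, the subgroup generated by the brackets `ab' - a'b`
is the ideal of `R` spanned by the coordinates of `Λ`. An ideal of the finite product `R` is the
product of its projections, and the projection to `W_i` is spanned by the coordinates of
`π_i(Λ)`. As `W_i` is a discrete valuation ring with uniformizer `p`, and some coordinate is
`p^{ε_i}` times a unit by maximality of `ε_i`, this ideal is `p^{ε_i} W_i`.

For the quotient, `W(k)/p^e ≅ W_e(k)` has `|k|^e` elements, and the Teichmüller lifts of an
`𝔽_p`-basis of `k` generate `W(k)` modulo `p`, hence modulo `p^e`; so they give a surjection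
`(ℤ/p^e)^f → W(k)/p^e` between sets of the same size.
-/

theorem exists_nsmul_eq_mk_iff {R : Type*} [Semiring R] (n : ℕ) (a b : R) :
    (∃ y : R × R, n • y = (a, b)) ↔ (n : R) ∣ a ∧ (n : R) ∣ b := by
  simp [Prod.ext_iff, nsmul_eq_mul, dvd_def, eq_comm]

theorem AddSubgroup.closure_bracket_eq_span {R : Type*} [CommRing R] (Λ : Set (R × R)) :
    AddSubgroup.closure {z | ∃ x ∈ Λ, ∃ y : R × R, z = x.1 * y.2 - y.1 * x.2} =
      (Ideal.span (Prod.fst '' Λ ∪ Prod.snd '' Λ)).toAddSubgroup := by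
  set G := AddSubgroup.closure {z | ∃ x ∈ Λ, ∃ y : R × R, z = x.1 * y.2 - y.1 * x.2}
  have hmul : ∀ r, ∀ z ∈ G, r * z ∈ G := by
    intro r z hz
    induction hz using AddSubgroup.closure_induction with
    | mem z hz =>
      obtain ⟨x, hx, y, rfl⟩ := hz
      exact AddSubgroup.subset_closure ⟨x, hx, (r * y.1, r * y.2), by ring⟩
    | zero => simp
    | add _ _ _ _ ha hb => simpa [mul_add] using add_mem ha hb
    | neg _ _ ha => simpa using neg_mem ha
  apply le_antisymm
  · rw [AddSubgroup.closure_le]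
    rintro _ ⟨x, hx, y, rfl⟩
    refine sub_mem (Ideal.mul_mem_right _ _ (Ideal.subset_span ?_))
      (Ideal.mul_mem_left _ _ (Ideal.subset_span ?_))
    exacts [Or.inl ⟨x, hx, rfl⟩, Or.inr ⟨x, hx, rfl⟩]
  · intro z hz
    induction hz using Submodule.span_induction with
    | mem z hz =>
      apply AddSubgroup.subset_closure
      obtain ⟨x, hx, rfl⟩ | ⟨x, hx, rfl⟩ := hz
      · exact ⟨x, hx, (0, 1), by simp⟩
      · exact ⟨x, hx, (-1, 0), by simp⟩
    | zero => exact zero_mem G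
    | add _ _ _ _ ha hb => exact add_mem ha hb
    | smul r z _ hz => exact hmul r z hz

namespace Ideal

variable {ι : Type*} {R : ι → Type*} [∀ i, CommRing (R i)]

theorem span_eq_pi_span_image [Finite ι] (C : Set (∀ i, R i)) :
    span C = pi fun i => span ((fun x => x i) '' C) :=
  calc span C = piOrderIso.symm (piOrderIso (span C)) := (piOrderIso.symm_apply_apply _).symm
    _ = pi fun i => (span C).map (Pi.evalRingHom R i) := rfl
    _ = _ := by simp only [map_span]; rfl

noncomputable def quotientPiEquivPiQuotient (I : ∀ i, Ideal (R i)) :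
    (∀ i, R i) ⧸ pi I ≃+* ∀ i, R i ⧸ I i :=
  let π : (∀ i, R i) →+* ∀ i, R i ⧸ I i :=
    RingHom.pi fun i => (Quotient.mk (I i)).comp (Pi.evalRingHom R i)
  have hker : pi I = RingHom.ker π := by
    ext; simp [π, mem_pi, RingHom.mem_ker, funext_iff, Quotient.eq_zero_iff_mem]
  (quotEquivOfEq hker).trans <| RingHom.quotientKerEquivOfSurjective
    (Function.Surjective.piMap fun i => Quotient.mk_surjective (I := I i))

end Ideal

theorem IsLocalRing.span_eq_span_pow_of_dvd {R : Type*} [CommRing R] [IsLocalRing R] {ϖ : R}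
    (hϖ : maximalIdeal R = Ideal.span {ϖ}) {S : Set R} {e : ℕ}
    (hdvd : ∀ s ∈ S, ϖ ^ e ∣ s) (hndvd : ∃ s ∈ S, ¬ϖ ^ (e + 1) ∣ s) :
    Ideal.span S = Ideal.span {ϖ ^ e} := by
  refine le_antisymm (Ideal.span_le.mpr fun s hs => Ideal.mem_span_singleton.mpr (hdvd s hs)) ?_
  obtain ⟨s, hs, hs'⟩ := hndvd
  obtain ⟨u, rfl⟩ := hdvd s hs
  have hu : IsUnit u := by
    rw [← notMem_maximalIdeal, hϖ, Ideal.mem_span_singleton]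
    exact fun h => hs' (pow_succ ϖ e ▸ mul_dvd_mul_left _ h)
  rw [Ideal.span_singleton_le_iff_mem]
  exact (Ideal.mul_unit_mem_iff_mem _ hu).mp (Ideal.subset_span hs)

theorem exists_pow_dvd_sub_sum_nsmul {A ι : Type*} [CommRing A] [Fintype ι] {m : ℕ}
    (w : ι → A) (h : ∀ x, ∃ v : ι → ℕ, (m : A) ∣ x - ∑ j, v j • w j) (n : ℕ) (x : A) :
    ∃ v : ι → ℕ, (m : A) ^ n ∣ x - ∑ j, v j • w j := by
  induction n generalizing x with
  | zero => exact ⟨0, by simp⟩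
  | succ n ih =>
    obtain ⟨v, y, hy⟩ := ih x
    obtain ⟨u, z, hz⟩ := h y
    refine ⟨fun j => v j + m ^ n * u j, z, ?_⟩
    simp only [nsmul_eq_mul] at hy hz ⊢
    push_cast
    simp only [add_mul, Finset.sum_add_distrib, mul_assoc, ← Finset.mul_sum]
    linear_combination hy + (m : A) ^ n * hz

namespace WittVector

variable {p : ℕ} [hp : Fact p.Prime] {k : Type*} [CommRing k] [CharP k p] [PerfectRing k p]

local notation "𝕎" => WittVector p

theorem ker_truncate_eq_span (n : ℕ) :
    RingHom.ker (truncate (p := p) (R := k) n) = Ideal.span {(p : 𝕎 k) ^ n} := by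
  ext x
  rw [mem_ker_truncate, mem_span_p_pow_iff_le_coeff_eq_zero]

noncomputable def quotientSpanPPowEquiv (n : ℕ) :
    𝕎 k ⧸ Ideal.span {(p : 𝕎 k) ^ n} ≃+* TruncatedWittVector p n k :=
  (Ideal.quotEquivOfEq (ker_truncate_eq_span n).symm).trans
    (RingHom.quotientKerEquivOfSurjective (truncate_surjective p n k))

theorem exists_dvd_sub_sum_teichmuller {ι : Type*} [Fintype ι] [Module (ZMod p) k]
    (b : Module.Basis ι (ZMod p) k) (x : 𝕎 k) :
    ∃ v : ι → ℕ, (p : 𝕎 k) ∣ x - ∑ j, v j • teichmuller p (b j) := by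
  refine ⟨fun j => (b.repr (x.coeff 0) j).val, ?_⟩
  rw [← Ideal.mem_span_singleton, mem_span_p_iff_coeff_zero_eq_zero, ← constantCoeff_apply]
  simp only [map_sub, map_sum, map_nsmul, constantCoeff_apply, teichmuller_coeff_zero,
    ← Nat.cast_smul_eq_nsmul (ZMod p), ZMod.natCast_zmod_val, b.sum_repr, sub_self]

theorem nonempty_quotient_span_p_pow_addEquiv [Finite k] [Module (ZMod p) k] {ι : Type*} [Fintype ι] (b : Module.Basis ι (ZMod p) k) (n : ℕ) :
    Nonempty ((𝕎 k ⧸ Ideal.span {(p : 𝕎 k) ^ n}) ≃+ (ι → ZMod (p ^ n))) := by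
  have : NeZero (p ^ n) := ⟨pow_ne_zero _ hp.out.ne_zero⟩
  have hB : ∀ y : 𝕎 k ⧸ Ideal.span {(p : 𝕎 k) ^ n}, p ^ n • y = 0 := by
    intro y
    obtain ⟨x, rfl⟩ := Ideal.Quotient.mk_surjective y
    rw [← map_nsmul, Ideal.Quotient.eq_zero_iff_mem, nsmul_eq_mul, Nat.cast_pow]
    exact Ideal.mul_mem_right _ _ (Ideal.mem_span_singleton_self _)
  have := AddCommGroup.zmodModule hB
  let ψ := Fintype.linearCombination (ZMod (p ^ n))
    fun j => Ideal.Quotient.mk (Ideal.span {(p : 𝕎 k) ^ n}) (teichmuller p (b j))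
  have hsurj : Function.Surjective ψ := by
    intro y
    obtain ⟨x, rfl⟩ := Ideal.Quotient.mk_surjective y
    obtain ⟨v, hv⟩ := exists_pow_dvd_sub_sum_nsmul _ (exists_dvd_sub_sum_teichmuller b) n x
    refine ⟨fun j => v j, ?_⟩
    rw [Fintype.linearCombination_apply]
    simp_rw [Nat.cast_smul_eq_nsmul, ← map_nsmul, ← map_sum]
    exact (Ideal.Quotient.eq.mpr (Ideal.mem_span_singleton.mpr hv)).symm
  have hcard : Nat.card (ι → ZMod (p ^ n)) ≤ Nat.card (𝕎 k ⧸ Ideal.span {(p : 𝕎 k) ^ n}) := by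
    have := Fintype.ofFinite k
    rw [Nat.card_congr (quotientSpanPPowEquiv n).toEquiv,
      Nat.card_eq_fintype_card (α := TruncatedWittVector p n k), TruncatedWittVector.card,
      ← Nat.card_eq_fintype_card, Nat.card_congr b.equivFun.toEquiv, Nat.card_fun, Nat.card_fun,
      Nat.card_zmod, Nat.card_zmod, ← pow_mul, ← pow_mul, mul_comm]
  exact ⟨(AddEquiv.ofBijective ψ.toAddMonoidHom (hsurj.bijective_of_nat_card_le hcard)).symm⟩

end WittVector

theorem heisenberg_commutator_lattice_general (p : ℕ) [Fact p.Prime] (g : ℕ) (f : Fin g → ℕ)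
    (hf : ∀ i, 0 < f i)
    (Λ : AddSubgroup ((∀ i : Fin g, WittVector p (GaloisField p (f i))) ×
      (∀ i : Fin g, WittVector p (GaloisField p (f i)))))
    (ε : Fin g → ℕ)
    (hε : ∀ i : Fin g,
      (∀ x ∈ Λ, ∃ y : WittVector p (GaloisField p (f i)) × WittVector p (GaloisField p (f i)),
        p ^ ε i • y = (x.1 i, x.2 i)) ∧
      ¬ (∀ x ∈ Λ, ∃ y : WittVector p (GaloisField p (f i)) × WittVector p (GaloisField p (f i)),
        p ^ (ε i + 1) • y = (x.1 i, x.2 i))) :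
    (∀ z : ∀ i : Fin g, WittVector p (GaloisField p (f i)),
      z ∈ AddSubgroup.closure {z : ∀ i : Fin g, WittVector p (GaloisField p (f i)) |
          ∃ x ∈ Λ, ∃ y : (∀ i : Fin g, WittVector p (GaloisField p (f i))) ×
            (∀ i : Fin g, WittVector p (GaloisField p (f i))),
            z = x.1 * y.2 - y.1 * x.2} ↔
        ∀ i : Fin g, ∃ w : WittVector p (GaloisField p (f i)), p ^ ε i • w = z i) ∧
    Nonempty (((∀ i : Fin g, WittVector p (GaloisField p (f i))) ⧸
        AddSubgroup.closure {z : ∀ i : Fin g, WittVector p (GaloisField p (f i)) |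
          ∃ x ∈ Λ, ∃ y : (∀ i : Fin g, WittVector p (GaloisField p (f i))) ×
            (∀ i : Fin g, WittVector p (GaloisField p (f i))),
            z = x.1 * y.2 - y.1 * x.2}) ≃+
      ∀ i : Fin g, Fin (f i) → ZMod (p ^ ε i)) := by
  have hspan : ∀ i, Ideal.span ((fun x : ∀ j : Fin g, WittVector p (GaloisField p (f j)) => x i) ''
      (Prod.fst '' SetLike.coe Λ ∪ Prod.snd '' SetLike.coe Λ)) =
      Ideal.span {(p : WittVector p (GaloisField p (f i))) ^ ε i} := by
    intro i
    obtain ⟨hdvd, hndvd⟩ := hε i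
    simp only [exists_nsmul_eq_mk_iff, Nat.cast_pow, not_forall, not_and_or] at hdvd hndvd
    refine IsLocalRing.span_eq_span_pow_of_dvd
      ((IsDiscreteValuationRing.irreducible_iff_uniformizer _).mp (WittVector.irreducible p)) ?_ ?_
    · rintro _ ⟨_, ⟨x, hx, rfl⟩ | ⟨x, hx, rfl⟩, rfl⟩
      exacts [(hdvd x hx).1, (hdvd x hx).2]
    · obtain ⟨x, hx, h | h⟩ := hndvd
      exacts [⟨_, ⟨_, Or.inl ⟨x, hx, rfl⟩, rfl⟩, h⟩, ⟨_, ⟨_, Or.inr ⟨x, hx, rfl⟩, rfl⟩, h⟩]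
  have hclosure := (AddSubgroup.closure_bracket_eq_span (SetLike.coe Λ)).trans <|
    congrArg Submodule.toAddSubgroup <|
      (Ideal.span_eq_pi_span_image _).trans (congrArg Ideal.pi (funext hspan))
  simp only [SetLike.mem_coe] at hclosure
  refine ⟨fun z => ?_, ?_⟩
  · simp only [hclosure, Submodule.mem_toAddSubgroup, Ideal.mem_pi, Ideal.mem_span_singleton',
      nsmul_eq_mul, Nat.cast_pow, mul_comm]
  · exact ⟨(QuotientAddGroup.quotientAddEquivOfEq hclosure).trans <|
      (Ideal.quotientPiEquivPiQuotient _).toAddEquiv.trans <| AddEquiv.piCongrRight fun i =>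
        (WittVector.nonempty_quotient_span_p_pow_addEquiv
          (Module.finBasisOfFinrankEq _ _ (GaloisField.finrank p (hf i).ne')) (ε i)).some⟩

/-- Let `W_i = W(𝔽_{p^{f_i}})` and `R = W_1 × ⋯ × W_g`. For an additive subgroup
`Λ ≤ R ⊕ R` of finite index, with `ε_i(Λ)` the largest `e` such that the projection
of `Λ` to `W_i ⊕ W_i` is contained in `p^e(W_i ⊕ W_i)`, the additive subgroup of `R`
generated by `{a·b' - a'·b : (a,b) ∈ Λ, (a',b') ∈ R ⊕ R}` equals
`p^{ε_1}W_1 × ⋯ × p^{ε_g}W_g`, and the quotient of `R` by it is isomorphic to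
`∏_{i=1}^g (ℤ/p^{ε_i}ℤ)^{f_i}` as an abelian group. -/
theorem heisenberg_commutator_lattice (p : ℕ) [Fact p.Prime] (g : ℕ) (f : Fin g → ℕ)
    (hf : ∀ i, 0 < f i)
    (Λ : AddSubgroup ((∀ i : Fin g, WittVector p (GaloisField p (f i))) ×
      (∀ i : Fin g, WittVector p (GaloisField p (f i)))))
    (hΛ : Λ.FiniteIndex) (ε : Fin g → ℕ)
    (hε : ∀ i : Fin g,
      (∀ x ∈ Λ, ∃ y : WittVector p (GaloisField p (f i)) × WittVector p (GaloisField p (f i)),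
        p ^ ε i • y = (x.1 i, x.2 i)) ∧
      ¬ (∀ x ∈ Λ, ∃ y : WittVector p (GaloisField p (f i)) × WittVector p (GaloisField p (f i)),
        p ^ (ε i + 1) • y = (x.1 i, x.2 i))) :
    (∀ z : ∀ i : Fin g, WittVector p (GaloisField p (f i)),
      z ∈ AddSubgroup.closure {z : ∀ i : Fin g, WittVector p (GaloisField p (f i)) |
          ∃ x ∈ Λ, ∃ y : (∀ i : Fin g, WittVector p (GaloisField p (f i))) ×
            (∀ i : Fin g, WittVector p (GaloisField p (f i))),
            z = x.1 * y.2 - y.1 * x.2} ↔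
        ∀ i : Fin g, ∃ w : WittVector p (GaloisField p (f i)), p ^ ε i • w = z i) ∧
    Nonempty (((∀ i : Fin g, WittVector p (GaloisField p (f i))) ⧸
        AddSubgroup.closure {z : ∀ i : Fin g, WittVector p (GaloisField p (f i)) |
          ∃ x ∈ Λ, ∃ y : (∀ i : Fin g, WittVector p (GaloisField p (f i))) ×
            (∀ i : Fin g, WittVector p (GaloisField p (f i))),
            z = x.1 * y.2 - y.1 * x.2}) ≃+
      ∀ i : Fin g, Fin (f i) → ZMod (p ^ ε i)) :=
  heisenberg_commutator_lattice_general p g f hf Λ ε hε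
end

section
/- Let g ∈ ℕ, e = (e_1,…,e_g) ∈ ℕ^g, f = (f_1,…,f_g) ∈ ℕ^g, n = ∑_{i=1}^g e_i f_i, and C_i = ∑_{j≤i} e_j f_j (C_0 = 0). Let Adm_{e,f} ⊆ ℕ_0^n be the set of tuples ℓ such that for every i ∈ {1,…,g} there exist δ_i ∈ {0,…,e_i−1} and m_i ∈ ℕ_0 with ℓ_j = m_i + 1 for C_{i−1} < j ≤ C_{i−1}+δ_i f_i and ℓ_j = m_i for C_{i−1}+δ_i f_i < j ≤ C_i. Then in ℚ[[t]]: ∑_{ℓ ∈ Adm_{e,f}} t^{2(ℓ_1+⋯+ℓ_n)} = ∏_{i=1}^g (1 − t^{2f_i})^{−1} (each coefficient of t^k on the left is a finite sum, and each factor on the right is expanded as a geometric series). -/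
/-!
On its `i`-th block `(C_{i-1}, C_i]` an admissible tuple is determined by `s_i = e_i m_i + δ_i`;
conversely every `s_i ∈ ℕ` occurs, since `δ_i` and `m_i` are recovered by division with remainder
by `e_i`, and the block then sums to `f_i s_i`. Hence the admissible tuples of weight `k` are in
bijection with the `s ∈ ℕ^g` satisfying `∑ 2 f_i s_i = k`, and these are counted by the `t^k`
coefficient of the product of geometric series `∏ (1 - t^{2 f_i})⁻¹`.
-/

open Finset

namespace PowerSeries

variable {K : Type*} [Field K]

theorem inv_one_sub_X_pow_eq_mk {d : ℕ} (hd : 0 < d) :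
    (1 - X ^ d : K⟦X⟧)⁻¹ = mk fun k => if d ∣ k then 1 else 0 := by
  refine (inv_eq_iff_mul_eq_one (by simp [hd.ne'])).mpr ?_
  ext k
  rw [mul_sub, mul_one, map_sub, coeff_mul_X_pow', coeff_mk, coeff_one]
  rcases lt_or_ge k d with hk | hk
  · have : d ∣ k ↔ k = 0 := ⟨fun h => Nat.eq_zero_of_dvd_of_lt h hk, by rintro rfl; simp⟩
    simp [this, hk.not_ge]
  · obtain ⟨k, rfl⟩ := Nat.exists_eq_add_of_le hk
    simp [Nat.dvd_add_self_left, hd.ne']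

theorem coeff_prod_inv_one_sub_X_pow {ι : Type*} [Fintype ι] [DecidableEq ι] {d : ι → ℕ}
    (hd : ∀ i, 0 < d i) (k : ℕ) :
    coeff k (∏ i, (1 - X ^ d i : K⟦X⟧)⁻¹) =
      Nat.card {x : ι → ℕ // ∑ i, d i * x i = k} := by
  simp only [inv_one_sub_X_pow_eq_mk (hd _), coeff_prod, coeff_mk, prod_boole, mem_univ,
    true_implies]
  rw [sum_boole, ← Nat.card_eq_finsetCard]
  refine congrArg Nat.cast (Nat.card_congr
    { toFun := fun l => ⟨fun i => l.1 i / d i, ?_⟩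
      invFun := fun x => ⟨Finsupp.equivFunOnFinite.symm fun i => d i * x.1 i, ?_⟩
      left_inv := fun l => ?_
      right_inv := fun x => ?_ })
  · obtain ⟨l, hl⟩ := l
    simp only [mem_filter, mem_finsuppAntidiag] at hl
    simp only [Nat.mul_div_cancel' (hl.2 _), ← hl.1.1]
  · simp [mem_finsuppAntidiag, x.2]
  · ext i
    simp [Nat.mul_div_cancel' ((mem_filter.mp l.2).2 i)]
  · ext i
    simp [Nat.mul_div_cancel_left _ (hd i)]

end PowerSeries

-- The `(δ, m)`-block on `(a, a + e f]` with `δ = s % e` and `m = s / e`.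
def stepTuple (a e f s : ℕ) (j : ℕ) : ℕ :=
  s / e + if j ≤ a + s % e * f then 1 else 0

theorem sum_stepTuple {e : ℕ} (he : 0 < e) (a f s : ℕ) :
    ∑ j ∈ Ioc a (a + e * f), stepTuple a e f s j = f * s := by
  have hδ : s % e ≤ e := (Nat.mod_lt s he).le
  have hδf : a + s % e * f ≤ a + e * f := by gcongr
  rw [← sum_Ioc_consecutive _ (Nat.le_add_right a (s % e * f)) hδf,
    sum_congr rfl fun j hj => show stepTuple a e f s j = s / e + 1 by
      simp [stepTuple, (mem_Ioc.mp hj).2],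
    sum_congr rfl fun j hj => show stepTuple a e f s j = s / e by
      simp [stepTuple, (mem_Ioc.mp hj).1],
    sum_const, sum_const, Nat.card_Ioc, Nat.card_Ioc, smul_eq_mul, smul_eq_mul,
    Nat.add_sub_cancel_left, Nat.add_sub_add_left, ← Nat.sub_mul]
  conv_rhs => rw [← Nat.div_add_mod s e]
  zify [hδ]
  ring

theorem exists_step_iff_exists_stepTuple {e : ℕ} (he : 0 < e) (a f : ℕ) (ℓ : ℕ → ℕ) :
    (∃ δ < e, ∃ m, (∀ j, a < j → j ≤ a + δ * f → ℓ j = m + 1) ∧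
        (∀ j, a + δ * f < j → j ≤ a + e * f → ℓ j = m)) ↔
      ∃ s, ∀ j ∈ Ioc a (a + e * f), ℓ j = stepTuple a e f s j := by
  constructor
  · rintro ⟨δ, hδ, m, hup, hlo⟩
    refine ⟨e * m + δ, fun j hj => ?_⟩
    have hdiv : (e * m + δ) / e = m := by
      rw [Nat.mul_add_div he, Nat.div_eq_of_lt hδ, add_zero]
    have hmod : (e * m + δ) % e = δ := by rw [Nat.mul_add_mod, Nat.mod_eq_of_lt hδ]
    rw [mem_Ioc] at hj
    simp only [stepTuple, hdiv, hmod]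
    split_ifs with h
    · exact hup j hj.1 h
    · exact hlo j (not_le.mp h) hj.2
  · rintro ⟨s, hs⟩
    have hδf : s % e * f ≤ e * f := Nat.mul_le_mul_right f (Nat.mod_lt s he).le
    refine ⟨s % e, Nat.mod_lt s he, s / e, fun j h1 h2 => ?_, fun j h1 h2 => ?_⟩
    · rw [hs j (mem_Ioc.mpr ⟨h1, by omega⟩), stepTuple, if_pos h2]
    · rw [hs j (mem_Ioc.mpr ⟨by omega, h2⟩), stepTuple, if_neg (not_le.mpr h1), add_zero]

section Blocks

variable {C : ℕ → ℕ}

theorem sum_Ioc_eq_sum_blocks (hC : Monotone C) (ℓ : ℕ → ℕ) (g : ℕ) :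
    ∑ j ∈ Ioc (C 0) (C g), ℓ j = ∑ i ∈ Icc 1 g, ∑ j ∈ Ioc (C (i - 1)) (C i), ℓ j := by
  induction g with
  | zero => simp
  | succ g ih =>
    rw [sum_Icc_succ_top (by omega), ← ih, Nat.add_sub_cancel,
      sum_Ioc_consecutive _ (hC g.zero_le) (hC g.le_succ)]

theorem exists_mem_block {g j : ℕ} (hj : j ∈ Ioc (C 0) (C g)) :
    ∃ i ∈ Icc 1 g, j ∈ Ioc (C (i - 1)) (C i) := by
  induction g with
  | zero => simp at hj
  | succ g ih =>
    by_cases h : j ≤ C g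
    · obtain ⟨i, hi, hji⟩ := ih (mem_Ioc.mpr ⟨(mem_Ioc.mp hj).1, h⟩)
      exact ⟨i, by simp at hi ⊢; omega, hji⟩
    · exact ⟨g + 1, by simp, by simpa using ⟨not_le.mp h, (mem_Ioc.mp hj).2⟩⟩

theorem eq_of_mem_block (hC : Monotone C) {i i' j : ℕ} (hi : 1 ≤ i) (hi' : 1 ≤ i')
    (h : j ∈ Ioc (C (i - 1)) (C i)) (h' : j ∈ Ioc (C (i' - 1)) (C i')) : i = i' := by
  rw [mem_Ioc] at h h'
  by_contra hne
  rcases Nat.lt_or_gt_of_ne hne with hlt | hlt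
  · have := hC (show i ≤ i' - 1 by omega); omega
  · have := hC (show i' ≤ i - 1 by omega); omega

end Blocks

section Admissible

variable {g : ℕ} {e f : ℕ → ℕ}

def blockEnd (e f : ℕ → ℕ) (i : ℕ) : ℕ := ∑ c ∈ Icc 1 i, e c * f c

theorem blockEnd_mono : Monotone (blockEnd e f) := fun _ _ hij =>
  sum_le_sum_of_subset (Icc_subset_Icc_right hij)

@[simp]
theorem blockEnd_zero : blockEnd e f 0 = 0 := by simp [blockEnd]

theorem blockEnd_of_pos {i : ℕ} (hi : 1 ≤ i) :
    blockEnd e f i = blockEnd e f (i - 1) + e i * f i := by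
  obtain ⟨i, rfl⟩ := Nat.exists_eq_add_of_le' hi
  exact sum_Icc_succ_top (by omega) _

def block (e f : ℕ → ℕ) (i : ℕ) : Finset ℕ := Ioc (blockEnd e f (i - 1)) (blockEnd e f i)

def IsAdmissible (g : ℕ) (e f ℓ : ℕ → ℕ) : Prop :=
  ∀ i ∈ Icc 1 g, ∃ δ < e i, ∃ m : ℕ,
    (∀ j, blockEnd e f (i - 1) < j → j ≤ blockEnd e f (i - 1) + δ * f i → ℓ j = m + 1) ∧
    (∀ j, blockEnd e f (i - 1) + δ * f i < j → j ≤ blockEnd e f i → ℓ j = m)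

theorem isAdmissible_iff (he : ∀ i ∈ Icc 1 g, 0 < e i) {ℓ : ℕ → ℕ} :
    IsAdmissible g e f ℓ ↔ ∀ i ∈ Icc 1 g,
      ∃ s, ∀ j ∈ block e f i, ℓ j = stepTuple (blockEnd e f (i - 1)) (e i) (f i) s j := by
  refine forall₂_congr fun i hi => ?_
  rw [block, blockEnd_of_pos (mem_Icc.mp hi).1]
  exact exists_step_iff_exists_stepTuple (he i hi) _ _ ℓ

theorem sum_block_eq_mul {i : ℕ} (hi : 1 ≤ i) (he : 0 < e i) {ℓ : ℕ → ℕ} {s : ℕ}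
    (hs : ∀ j ∈ block e f i, ℓ j = stepTuple (blockEnd e f (i - 1)) (e i) (f i) s j) :
    ∑ j ∈ block e f i, ℓ j = f i * s := by
  rw [sum_congr rfl hs, block, blockEnd_of_pos hi, sum_stepTuple he]

def admTuple (g : ℕ) (e f : ℕ → ℕ) (x : Icc 1 g → ℕ) (j : ℕ) : ℕ :=
  ∑ i : Icc 1 g,
    if j ∈ block e f i then stepTuple (blockEnd e f (i - 1)) (e i) (f i) (x i) j else 0

theorem admTuple_of_mem_block (x : Icc 1 g → ℕ) {i : Icc 1 g} {j : ℕ}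
    (hj : j ∈ block e f i) :
    admTuple g e f x j = stepTuple (blockEnd e f (i - 1)) (e i) (f i) (x i) j := by
  rw [admTuple, Fintype.sum_eq_single i, if_pos hj]
  intro i' hne
  exact if_neg fun hj' => hne (Subtype.ext <|
    eq_of_mem_block blockEnd_mono (mem_Icc.mp i'.2).1 (mem_Icc.mp i.2).1 hj' hj)

theorem admTuple_of_notMem (x : Icc 1 g → ℕ) {j : ℕ} (hj : j ∉ Ioc 0 (blockEnd e f g)) :
    admTuple g e f x j = 0 := by
  refine sum_eq_zero fun i _ => if_neg fun hji => hj ?_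
  have hi := mem_Icc.mp i.2
  simp only [block, mem_Ioc] at hji ⊢
  exact ⟨by omega, hji.2.trans (blockEnd_mono hi.2)⟩

def blockCounts (g : ℕ) (e f ℓ : ℕ → ℕ) (i : Icc 1 g) : ℕ := (∑ j ∈ block e f i, ℓ j) / f i

theorem blockCounts_eq {ℓ : ℕ → ℕ} {i : Icc 1 g} {s : ℕ} (he : 0 < e i) (hf : 0 < f i)
    (hs : ∀ j ∈ block e f i, ℓ j = stepTuple (blockEnd e f (i - 1)) (e i) (f i) s j) :
    blockCounts g e f ℓ i = s := by
  rw [blockCounts, sum_block_eq_mul (mem_Icc.mp i.2).1 he hs, Nat.mul_div_cancel_left _ hf]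

theorem isTuple_admTuple {n : ℕ} (hn : n = blockEnd e f g) (x : Icc 1 g → ℕ) :
    IsTuple n (admTuple g e f x) := fun j hj =>
  admTuple_of_notMem x (by rw [mem_Ioc]; omega)

theorem isAdmissible_admTuple (he : ∀ i ∈ Icc 1 g, 0 < e i) (x : Icc 1 g → ℕ) :
    IsAdmissible g e f (admTuple g e f x) :=
  (isAdmissible_iff he).mpr fun i hi =>
    ⟨x ⟨i, hi⟩, fun _ hj => admTuple_of_mem_block x (i := ⟨i, hi⟩) hj⟩

def admEquiv (he : ∀ i ∈ Icc 1 g, 0 < e i) (hf : ∀ i ∈ Icc 1 g, 0 < f i) {n : ℕ}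
    (hn : n = blockEnd e f g) : {ℓ // IsTuple n ℓ ∧ IsAdmissible g e f ℓ} ≃ (Icc 1 g → ℕ) where
  toFun ℓ := blockCounts g e f ℓ.1
  invFun x := ⟨admTuple g e f x, isTuple_admTuple hn x, isAdmissible_admTuple he x⟩
  left_inv := fun ⟨ℓ, htup, hadm⟩ => Subtype.ext <| funext fun j => by
    show admTuple g e f (blockCounts g e f ℓ) j = ℓ j
    by_cases hj : j ∈ Ioc 0 (blockEnd e f g)
    · obtain ⟨i, hi, hji⟩ :=
        exists_mem_block (C := blockEnd e f) (g := g) (by rwa [blockEnd_zero])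
      obtain ⟨s, hs⟩ := (isAdmissible_iff he).mp hadm i hi
      rw [admTuple_of_mem_block _ (i := ⟨i, hi⟩) hji,
        blockCounts_eq (i := ⟨i, hi⟩) (he i hi) (hf i hi) hs, hs j hji]
    · rw [admTuple_of_notMem _ hj, htup j (by rw [mem_Ioc] at hj; omega)]
  right_inv x := funext fun i =>
    blockCounts_eq (he i i.2) (hf i i.2) fun _ hj => admTuple_of_mem_block x hj

theorem two_mul_sum_eq_sum_admEquiv (he : ∀ i ∈ Icc 1 g, 0 < e i) (hf : ∀ i ∈ Icc 1 g, 0 < f i)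
    {n : ℕ} (hn : n = blockEnd e f g) (ℓ : {ℓ // IsTuple n ℓ ∧ IsAdmissible g e f ℓ}) :
    2 * ∑ j ∈ Icc 1 n, ℓ.1 j = ∑ i : Icc 1 g, 2 * f i * admEquiv he hf hn ℓ i := by
  have hIcc : Icc 1 n = Ioc (blockEnd e f 0) (blockEnd e f g) := by
    rw [blockEnd_zero, hn]
    exact Icc_add_one_left_eq_Ioc 0 _
  rw [hIcc, sum_Ioc_eq_sum_blocks blockEnd_mono, ← sum_coe_sort, mul_sum]
  refine sum_congr rfl fun i _ => ?_
  obtain ⟨s, hs⟩ := (isAdmissible_iff he).mp ℓ.2.2 i i.2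
  rw [mul_assoc]
  show 2 * ∑ j ∈ block e f i, ℓ.1 j = 2 * (f i * blockCounts g e f ℓ.1 i)
  rw [blockCounts_eq (he i i.2) (hf i i.2) hs,
    sum_block_eq_mul (mem_Icc.mp i.2).1 (he i i.2) hs]

def admWeightEquiv (he : ∀ i ∈ Icc 1 g, 0 < e i) (hf : ∀ i ∈ Icc 1 g, 0 < f i) {n : ℕ}
    (hn : n = blockEnd e f g) (k : ℕ) :
    {ℓ // IsTuple n ℓ ∧ IsAdmissible g e f ℓ ∧ 2 * ∑ j ∈ Icc 1 n, ℓ j = k} ≃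
      {x : Icc 1 g → ℕ // ∑ i : Icc 1 g, 2 * f i * x i = k} :=
  (Equiv.subtypeEquivRight fun _ => and_assoc.symm).trans <|
    (Equiv.subtypeSubtypeEquivSubtypeInter _ _).symm.trans <|
      (admEquiv he hf hn).subtypeEquiv fun ℓ => by rw [two_mul_sum_eq_sum_admEquiv]

end Admissible

theorem adm_generating_function_general (g : ℕ) (e f : ℕ → ℕ)
    (he : ∀ i ∈ Finset.Icc 1 g, 0 < e i) (hf : ∀ i ∈ Finset.Icc 1 g, 0 < f i)
    (n : ℕ) (hn : n = ∑ i ∈ Finset.Icc 1 g, e i * f i) :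
    (PowerSeries.mk fun k =>
        (Nat.card {ℓ : ℕ → ℕ // IsTuple n ℓ ∧
          (∀ i ∈ Finset.Icc 1 g, ∃ δ < e i, ∃ m : ℕ,
            (∀ j, (∑ c ∈ Finset.Icc 1 (i - 1), e c * f c) < j →
              j ≤ (∑ c ∈ Finset.Icc 1 (i - 1), e c * f c) + δ * f i → ℓ j = m + 1) ∧
            (∀ j, (∑ c ∈ Finset.Icc 1 (i - 1), e c * f c) + δ * f i < j →
              j ≤ ∑ c ∈ Finset.Icc 1 i, e c * f c → ℓ j = m)) ∧
          2 * (∑ j ∈ Finset.Icc 1 n, ℓ j) = k} : ℚ)) =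
      ∏ i ∈ Finset.Icc 1 g, (1 - PowerSeries.X ^ (2 * f i) : PowerSeries ℚ)⁻¹ := by
  ext k
  rw [PowerSeries.coeff_mk, ← prod_coe_sort, PowerSeries.coeff_prod_inv_one_sub_X_pow
    (ι := Icc 1 g) fun i => Nat.mul_pos two_pos (hf i i.2)]
  exact congrArg Nat.cast (Nat.card_congr (admWeightEquiv he hf hn k))

/-- For a decomposition type `(e, f)` with `n = ∑ e_i f_i` and `C_i = ∑_{j≤i} e_j f_j`,
the generating function of the admissible `n`-tuples satisfies
`∑_{ℓ ∈ Adm_{e,f}} t^{2(ℓ_1+⋯+ℓ_n)} = ∏_{i=1}^g (1 - t^{2f_i})⁻¹` in `ℚ[[t]]`. -/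
theorem adm_generating_function (g : ℕ) (hg : 0 < g) (e f : ℕ → ℕ)
    (he : ∀ i ∈ Finset.Icc 1 g, 0 < e i) (hf : ∀ i ∈ Finset.Icc 1 g, 0 < f i)
    (n : ℕ) (hn : n = ∑ i ∈ Finset.Icc 1 g, e i * f i) :
    (PowerSeries.mk fun k =>
        (Nat.card {ℓ : ℕ → ℕ // IsTuple n ℓ ∧
          (∀ i ∈ Finset.Icc 1 g, ∃ δ < e i, ∃ m : ℕ,
            (∀ j, (∑ c ∈ Finset.Icc 1 (i - 1), e c * f c) < j →
              j ≤ (∑ c ∈ Finset.Icc 1 (i - 1), e c * f c) + δ * f i → ℓ j = m + 1) ∧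
            (∀ j, (∑ c ∈ Finset.Icc 1 (i - 1), e c * f c) + δ * f i < j →
              j ≤ ∑ c ∈ Finset.Icc 1 i, e c * f c → ℓ j = m)) ∧
          2 * (∑ j ∈ Finset.Icc 1 n, ℓ j) = k} : ℚ)) =
      ∏ i ∈ Finset.Icc 1 g, (1 - PowerSeries.X ^ (2 * f i) : PowerSeries ℚ)⁻¹ :=
  adm_generating_function_general g e f he hf n hn
end
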